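/- Let G be a graph with maximum degree at most k, and suppose V(G) = A ∪ B with A ∩ B = {z}, there are no edges between A − z and B − z, and both induced subgraphs G[A] and G[B] are strongly k-edge-orientable. Then G is strongly k-edge-orientable. -/
import Mathlib


open SimpleGraph

/-- Adjacency in the line graph `L(G)`: two distinct edges sharing an endpoint. -/
def lineAdj {V : Type*} (G : SimpleGraph V) (e f : G.edgeSet) : Prop :=
  e ≠ f ∧ ∃ x : V, x ∈ (e : Sym2 V) ∧ x ∈ (f : Sym2 V)

/-- `D` is an orientation of the (loopless) adjacency relation `Adj`:
every arc of `D` is an edge, and every edge gets at least one of its two arcs. -/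
def IsOrientation {α : Type*} (Adj : α → α → Prop) (D : α → α → Prop) : Prop :=
  (∀ a b, D a b → Adj a b) ∧ (∀ a b, Adj a b → D a b ∨ D b a)

/-- A digraph (relation) is kernel-perfect if every induced subdigraph has a kernel:
an independent set `S` such that every vertex outside `S` has an out-neighbor in `S`. -/
def KernelPerfect {α : Type*} (D : α → α → Prop) : Prop :=
  ∀ Z : Set α, ∃ S ⊆ Z, (∀ a ∈ S, ∀ b ∈ S, ¬ D a b) ∧
    ∀ z ∈ Z, z ∉ S → ∃ s ∈ S, D z s

/-- Out-degree of a vertex in a digraph given as a relation. -/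
noncomputable def outDeg {α : Type*} (D : α → α → Prop) (a : α) : ℕ := {b | D a b}.ncard

/-- Degree of a vertex. -/
noncomputable def deg {V : Type*} (G : SimpleGraph V) (v : V) : ℕ := (G.neighborSet v).ncard

/-- Maximum degree. -/
noncomputable def maxDeg {V : Type*} (G : SimpleGraph V) : ℕ := sSup (Set.range (deg G))

/-- `G` is `f`-edge-orientable: `L(G)` admits a kernel-perfect orientation with
`1 + d⁺(e) ≤ f e` for every edge `e`. -/
def EdgeOrientable {V : Type*} (G : SimpleGraph V) (f : G.edgeSet → ℕ) : Prop :=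
  ∃ D : G.edgeSet → G.edgeSet → Prop,
    IsOrientation (lineAdj G) D ∧ KernelPerfect D ∧ ∀ e, outDeg D e + 1 ≤ f e

open Classical in
/-- The function `f_{k,v}`: `deg v` on edges incident to `v`, and `k` elsewhere. -/
noncomputable def fkv {V : Type*} (G : SimpleGraph V) (k : ℕ) (v : V) (e : G.edgeSet) : ℕ :=
  if v ∈ (e : Sym2 V) then deg G v else k

/-- `G` is strongly `k`-edge-orientable. -/
def StronglyEdgeOrientable {V : Type*} (G : SimpleGraph V) (k : ℕ) : Prop :=
  ∀ v : V, EdgeOrientable G (fkv G k v)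

/-- `G` is `f`-edge-choosable. -/
def FEdgeChoosable {V : Type*} (G : SimpleGraph V) (f : G.edgeSet → ℕ) : Prop :=
  ∀ ℓ : G.edgeSet → Finset ℕ, (∀ e, f e ≤ (ℓ e).card) →
    ∃ φ : G.edgeSet → ℕ, (∀ e, φ e ∈ ℓ e) ∧
      ∀ e₁ e₂, lineAdj G e₁ e₂ → φ e₁ ≠ φ e₂

/-- `G ∈ G*`: any two distinct odd cycles share at most one edge. -/
def InGStar {V : Type*} (G : SimpleGraph V) : Prop :=
  ∀ (u w : V) (c₁ : G.Walk u u) (c₂ : G.Walk w w),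
    c₁.IsCycle → c₂.IsCycle → Odd c₁.length → Odd c₂.length →
    {e | e ∈ c₁.edges} ≠ {e | e ∈ c₂.edges} →
    ({e | e ∈ c₁.edges} ∩ {e | e ∈ c₂.edges}).ncard ≤ 1

/-- `G` is 2-connected: connected, and still connected after deleting any one vertex. -/
def TwoConn {V : Type*} (G : SimpleGraph V) : Prop :=
  G.Connected ∧ ∀ v : V, (G.induce {w | w ≠ v}).Connected

/-- A block of `G`: a maximal 2-connected subgraph. -/
def IsBlock {V : Type*} (G : SimpleGraph V) (B : G.Subgraph) : Prop :=
  TwoConn B.coe ∧ ∀ B' : G.Subgraph, TwoConn B'.coe → B ≤ B' → B = B'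

/-- Vertex type of the theta graph with path lengths `l`: two hubs
(`Sum.inl false`, `Sum.inl true`) plus the internal vertices of each path. -/
def ThetaVert (l : List ℕ) : Type := Bool ⊕ (Σ i : Fin l.length, Fin (l.get i - 1))

/-- The theta graph `Θ_{l₁,…,l_k}`: two hubs joined by internally disjoint paths,
the `i`-th of length `l i`. -/
def thetaGraph (l : List ℕ) : SimpleGraph (ThetaVert l) :=
  SimpleGraph.fromRel (fun a b =>
    match a, b with
    | Sum.inl false, Sum.inl true => 1 ∈ l
    | Sum.inl false, Sum.inr ⟨_, j⟩ => j.val = 0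
    | Sum.inl true, Sum.inr ⟨i, j⟩ => j.val = l.get i - 2
    | Sum.inr ⟨i, j⟩, Sum.inr ⟨i', j'⟩ => i.val = i'.val ∧ j'.val = j.val + 1
    | _, _ => False)

/-- `v` (outside `c`) touches `w ∈ c`: some `v,w`-path meets `c` only at `w`. -/
def Touches {V : Type*} (G : SimpleGraph V) {u : V} (c : G.Walk u u) (v w : V) : Prop :=
  w ∈ c.support ∧ ∃ p : G.Walk v w, p.IsPath ∧ ∀ x ∈ p.support, x ∈ c.support → x = w


section Aux
variable {V : Type*} (G : SimpleGraph V) (A : Set V)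

/-- every endpoint of the edge lies in `A`. -/
def allIn (e : G.edgeSet) : Prop := ∀ x ∈ (e : Sym2 V), x ∈ A

lemma exists_mk (e : G.edgeSet) (he : allIn G A e) :
    ∃ f : (G.induce A).edgeSet, Sym2.map Subtype.val (f : Sym2 A) = (e : Sym2 V) := by
  obtain ⟨e, hE⟩ := e
  induction e using Sym2.ind with
  | _ a b =>
    have hadj : G.Adj a b := hE
    have ha : a ∈ A := he a (by simp)
    have hb : b ∈ A := he b (by simp)
    refine ⟨⟨s(⟨a, ha⟩, ⟨b, hb⟩), ?_⟩, ?_⟩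
    · simpa [SimpleGraph.mem_edgeSet] using hadj
    · simp

noncomputable def mkE (e : G.edgeSet) (he : allIn G A e) : (G.induce A).edgeSet :=
  Classical.choose (exists_mk G A e he)

lemma mkE_spec (e : G.edgeSet) (he : allIn G A e) :
    Sym2.map Subtype.val ((mkE G A e he : (G.induce A).edgeSet) : Sym2 A) = (e : Sym2 V) :=
  Classical.choose_spec (exists_mk G A e he)

lemma mkE_inj {e f : G.edgeSet} {he : allIn G A e} {hf : allIn G A f}
    (h : mkE G A e he = mkE G A f hf) : e = f := by
  apply Subtype.ext
  rw [← mkE_spec G A e he, ← mkE_spec G A f hf, h]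

lemma mem_mkE {e : G.edgeSet} (he : allIn G A e) (y : A) :
    y ∈ ((mkE G A e he : (G.induce A).edgeSet) : Sym2 A) ↔ (y : V) ∈ (e : Sym2 V) := by
  rw [← mkE_spec G A e he]
  constructor
  · intro h; exact Sym2.mem_map.mpr ⟨y, h, rfl⟩
  · intro h
    obtain ⟨y', hy', hval⟩ := Sym2.mem_map.mp h
    exact Subtype.val_injective hval ▸ hy'

lemma lineAdj_mkE {e f : G.edgeSet} (he : allIn G A e) (hf : allIn G A f) :
    lineAdj G e f ↔ lineAdj (G.induce A) (mkE G A e he) (mkE G A f hf) := by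
  constructor
  · rintro ⟨hne, x, hxe, hxf⟩
    refine ⟨fun h => hne (mkE_inj G A h), ⟨x, he x hxe⟩, ?_, ?_⟩
    · exact (mem_mkE G A he _).mpr hxe
    · exact (mem_mkE G A hf _).mpr hxf
  · rintro ⟨hne, y, hye, hyf⟩
    refine ⟨fun h => hne (by cases h; rfl), (y : V), ?_, ?_⟩
    · exact (mem_mkE G A he y).mp hye
    · exact (mem_mkE G A hf y).mp hyf

end Aux
set_option linter.unusedSectionVars false
section Aux2
variable {V : Type*} [Fintype V]

lemma incid_le_deg (G : SimpleGraph V) (v : V) (S : Set G.edgeSet)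
    (hS : ∀ e ∈ S, v ∈ (e : Sym2 V)) : S.ncard ≤ deg G v := by
  classical
  have key : ∀ (e : G.edgeSet) (h : v ∈ (e : Sym2 V)), Sym2.Mem.other h ∈ G.neighborSet v := by
    intro e h
    have : s(v, Sym2.Mem.other h) ∈ G.edgeSet := by rw [Sym2.other_spec h]; exact e.2
    exact this
  refine Set.ncard_le_ncard_of_injOn
    (fun e => if h : v ∈ (e : Sym2 V) then Sym2.Mem.other h else v) ?_ ?_ (Set.toFinite _)
  · intro e he
    simp only [dif_pos (hS e he)]
    exact key e (hS e he)
  · intro e he f hf hef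
    simp only [dif_pos (hS e he), dif_pos (hS f hf)] at hef
    apply Subtype.ext
    rw [← Sym2.other_spec (hS e he), ← Sym2.other_spec (hS f hf), hef]

lemma deg_induce_le (G : SimpleGraph V) (A : Set V) (w : A) :
    deg (G.induce A) w ≤ deg G (w : V) := by
  refine Set.ncard_le_ncard_of_injOn (fun x => (x : V)) ?_
    (fun a _ b _ h => Subtype.ext h) (Set.toFinite _)
  intro x hx
  simpa using hx

lemma deg_le_of_maxDeg_le (G : SimpleGraph V) (k : ℕ) (h : maxDeg G ≤ k) (v : V) :
    deg G v ≤ k :=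
  le_trans (le_csSup (Set.Finite.bddAbove (Set.finite_range _)) ⟨v, rfl⟩) h

lemma neighborSet_inter_eq (G : SimpleGraph V) (A : Set V) (z : V) (hz : z ∈ A) :
    G.neighborSet z ∩ A = Subtype.val '' ((G.induce A).neighborSet ⟨z, hz⟩) := by
  ext w
  constructor
  · rintro ⟨hadj, hwA⟩
    exact ⟨⟨w, hwA⟩, by simpa using hadj, rfl⟩
  · rintro ⟨⟨w, hwA⟩, hadj, rfl⟩
    exact ⟨by simpa using hadj, hwA⟩

lemma deg_split (G : SimpleGraph V) (A B : Set V) (z : V)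
    (hcover : A ∪ B = Set.univ) (hinter : A ∩ B = {z}) (hzA : z ∈ A) (hzB : z ∈ B) :
    deg G z = deg (G.induce A) ⟨z, hzA⟩ + deg (G.induce B) ⟨z, hzB⟩ := by
  have h1 : deg (G.induce A) ⟨z, hzA⟩ = (G.neighborSet z ∩ A).ncard := by
    rw [neighborSet_inter_eq G A z hzA, Set.ncard_image_of_injective _ Subtype.val_injective]
    rfl
  have h2 : deg (G.induce B) ⟨z, hzB⟩ = (G.neighborSet z ∩ B).ncard := by
    rw [neighborSet_inter_eq G B z hzB, Set.ncard_image_of_injective _ Subtype.val_injective]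
    rfl
  have hu : G.neighborSet z = (G.neighborSet z ∩ A) ∪ (G.neighborSet z ∩ B) := by
    rw [← Set.inter_union_distrib_left, hcover, Set.inter_univ]
  have hd : Disjoint (G.neighborSet z ∩ A) (G.neighborSet z ∩ B) := by
    rw [Set.disjoint_left]
    rintro w ⟨hw1, hwA⟩ ⟨hw2, hwB⟩
    have : w ∈ ({z} : Set V) := hinter ▸ ⟨hwA, hwB⟩
    exact G.irrefl (this ▸ hw1)
  rw [deg, hu, Set.ncard_union_eq hd (Set.toFinite _) (Set.toFinite _), h1, h2]

end Aux2
section Aux3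
variable {V : Type*} (G : SimpleGraph V)

lemma not_allIn_both {A B : Set V} {z : V} (hinter : A ∩ B = {z}) (e : G.edgeSet)
    (hA : allIn G A e) (hB : allIn G B e) : False := by
  obtain ⟨e, hE⟩ := e
  induction e using Sym2.ind with
  | _ a b =>
    have hadj : G.Adj a b := hE
    have ha : a ∈ ({z} : Set V) := hinter ▸ ⟨hA a (by simp), hB a (by simp)⟩
    have hb : b ∈ ({z} : Set V) := hinter ▸ ⟨hA b (by simp), hB b (by simp)⟩
    exact hadj.ne (ha.trans hb.symm)

lemma allIn_classify {A B : Set V} {z : V} (hcover : A ∪ B = Set.univ)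
    (hinter : A ∩ B = {z})
    (hsep : ∀ a ∈ A, ∀ b ∈ B, a ≠ z → b ≠ z → ¬ G.Adj a b) (e : G.edgeSet) :
    allIn G A e ∨ allIn G B e := by
  have hz : z ∈ A ∩ B := by rw [hinter]; rfl
  obtain ⟨e, hE⟩ := e
  induction e using Sym2.ind with
  | _ a b =>
    have hadj : G.Adj a b := hE
    have hmem : ∀ x : V, x ∈ A ∨ x ∈ B := by
      intro x
      have : x ∈ A ∪ B := by rw [hcover]; trivial
      exact this
    have hall : ∀ (S : Set V), a ∈ S → b ∈ S →
        allIn G S (⟨s(a, b), hE⟩ : G.edgeSet) := by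
      intro S ha hb x hx
      rcases Sym2.mem_iff.mp hx with rfl | rfl
      · exact ha
      · exact hb
    rcases hmem a with ha | ha <;> rcases hmem b with hb | hb
    · exact Or.inl (hall A ha hb)
    · by_cases haz : a = z
      · exact Or.inr (hall B (haz ▸ hz.2) hb)
      · by_cases hbz : b = z
        · exact Or.inl (hall A ha (hbz ▸ hz.1))
        · exact absurd hadj (hsep a ha b hb haz hbz)
    · by_cases haz : a = z
      · exact Or.inl (hall A (haz ▸ hz.1) hb)
      · by_cases hbz : b = z
        · exact Or.inr (hall B ha (hbz ▸ hz.2))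
        · exact absurd hadj.symm (hsep b hb a ha hbz haz)
    · exact Or.inr (hall B ha hb)

end Aux3
lemma half {V : Type*} [Fintype V] (G : SimpleGraph V) (k : ℕ)
    (hΔ : maxDeg G ≤ k) (A B : Set V) (z : V)
    (hcover : A ∪ B = Set.univ) (hinter : A ∩ B = {z})
    (hsep : ∀ a ∈ A, ∀ b ∈ B, a ≠ z → b ≠ z → ¬ G.Adj a b)
    (hA : StronglyEdgeOrientable (G.induce A) k)
    (hB : StronglyEdgeOrientable (G.induce B) k)
    (v : V) (hv : v ∈ A) : EdgeOrientable G (fkv G k v) := by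
  classical
  have hz : z ∈ A ∩ B := by rw [hinter]; rfl
  obtain ⟨DA, ⟨DAor1, DAor2⟩, DAkp, DAdeg⟩ := hA ⟨v, hv⟩
  obtain ⟨DB, ⟨DBor1, DBor2⟩, DBkp, DBdeg⟩ := hB ⟨z, hz.2⟩
  refine ⟨fun e f =>
    (∃ (he : allIn G A e) (hf : allIn G A f), DA (mkE G A e he) (mkE G A f hf)) ∨
    (∃ (he : allIn G B e) (hf : allIn G B f), DB (mkE G B e he) (mkE G B f hf)) ∨
    (allIn G B e ∧ allIn G A f ∧ z ∈ (e : Sym2 V) ∧ z ∈ (f : Sym2 V)),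
    ⟨?_, ?_⟩, ?_, ?_⟩
  · -- arcs are edges
    rintro a b (⟨ha, hb, h⟩ | ⟨ha, hb, h⟩ | ⟨hb', ha', hza, hzb⟩)
    · exact (lineAdj_mkE G A ha hb).mpr (DAor1 _ _ h)
    · exact (lineAdj_mkE G B ha hb).mpr (DBor1 _ _ h)
    · refine ⟨?_, z, hza, hzb⟩
      rintro rfl
      exact not_allIn_both G hinter a ha' hb'
  · -- totality
    intro a b hadj
    rcases allIn_classify G hcover hinter hsep a with ha | ha <;>
      rcases allIn_classify G hcover hinter hsep b with hb | hb
    · rcases DAor2 _ _ ((lineAdj_mkE G A ha hb).mp hadj) with h | h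
      · exact Or.inl (Or.inl ⟨ha, hb, h⟩)
      · exact Or.inr (Or.inl ⟨hb, ha, h⟩)
    · obtain ⟨hne, x, hxa, hxb⟩ := hadj
      have hxz : x = z := by
        have : x ∈ A ∩ B := ⟨ha x hxa, hb x hxb⟩
        rwa [hinter] at this
      subst hxz
      exact Or.inr (Or.inr (Or.inr ⟨hb, ha, hxb, hxa⟩))
    · obtain ⟨hne, x, hxa, hxb⟩ := hadj
      have hxz : x = z := by
        have : x ∈ A ∩ B := ⟨hb x hxb, ha x hxa⟩
        rwa [hinter] at this
      subst hxz
      exact Or.inl (Or.inr (Or.inr ⟨ha, hb, hxa, hxb⟩))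
    · rcases DBor2 _ _ ((lineAdj_mkE G B ha hb).mp hadj) with h | h
      · exact Or.inl (Or.inr (Or.inl ⟨ha, hb, h⟩))
      · exact Or.inr (Or.inr (Or.inl ⟨hb, ha, h⟩))
  · -- kernel-perfect
    intro Z
    obtain ⟨SA', hSA'sub, hSA'ind, hSA'dom⟩ :=
      DAkp {g | ∃ (e : G.edgeSet) (he : allIn G A e), e ∈ Z ∧ mkE G A e he = g}
    set SA : Set G.edgeSet :=
      {e | ∃ he : allIn G A e, e ∈ Z ∧ mkE G A e he ∈ SA'} with hSA
    obtain ⟨SB', hSB'sub, hSB'ind, hSB'dom⟩ :=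
      DBkp {g | ∃ (e : G.edgeSet) (he : allIn G B e), e ∈ Z ∧
        ¬ (z ∈ (e : Sym2 V) ∧ ∃ s ∈ SA, z ∈ (s : Sym2 V)) ∧ mkE G B e he = g}
    set SB : Set G.edgeSet :=
      {e | ∃ he : allIn G B e, e ∈ Z ∧
        ¬ (z ∈ (e : Sym2 V) ∧ ∃ s ∈ SA, z ∈ (s : Sym2 V)) ∧ mkE G B e he ∈ SB'} with hSB
    refine ⟨SA ∪ SB, ?_, ?_, ?_⟩
    · rintro e (⟨he, heZ, _⟩ | ⟨he, heZ, _, _⟩) <;> exact heZ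
    · rintro a (⟨haA, haZ, haS⟩ | ⟨haB, haZ, hanb, haS⟩) b
        (⟨hbA, hbZ, hbS⟩ | ⟨hbB, hbZ, hbnb, hbS⟩) hD
      · rcases hD with ⟨ha', hb', h⟩ | ⟨ha', hb', h⟩ | ⟨ha', hb', _, _⟩
        · exact hSA'ind _ haS _ hbS h
        · exact not_allIn_both G hinter a haA ha'
        · exact not_allIn_both G hinter a haA ha'
      · rcases hD with ⟨ha', hb', h⟩ | ⟨ha', hb', h⟩ | ⟨ha', hb', _, _⟩
        · exact not_allIn_both G hinter b hb' hbB
        · exact not_allIn_both G hinter a haA ha'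
        · exact not_allIn_both G hinter a haA ha'
      · rcases hD with ⟨ha', hb', h⟩ | ⟨ha', hb', h⟩ | ⟨ha', hb', hza, hzb⟩
        · exact not_allIn_both G hinter a ha' haB
        · exact not_allIn_both G hinter b hbA hb'
        · exact hanb ⟨hza, b, ⟨hbA, hbZ, hbS⟩, hzb⟩
      · rcases hD with ⟨ha', hb', h⟩ | ⟨ha', hb', h⟩ | ⟨ha', hb', _, _⟩
        · exact not_allIn_both G hinter a ha' haB
        · exact hSB'ind _ haS _ hbS h
        · exact not_allIn_both G hinter b hb' hbB
    · intro e heZ heS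
      rcases allIn_classify G hcover hinter hsep e with hP | hQ
      · have hmem : mkE G A e hP ∈
            {g | ∃ (e : G.edgeSet) (he : allIn G A e), e ∈ Z ∧ mkE G A e he = g} :=
          ⟨e, hP, heZ, rfl⟩
        have hnot : mkE G A e hP ∉ SA' := fun hc => heS (Or.inl ⟨hP, heZ, hc⟩)
        obtain ⟨s', hs'S, hDA⟩ := hSA'dom _ hmem hnot
        obtain ⟨f, hf, hfZ, hmk⟩ := hSA'sub hs'S
        refine ⟨f, Or.inl ⟨hf, hfZ, by rw [hmk]; exact hs'S⟩, Or.inl ⟨hP, hf, ?_⟩⟩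
        rw [hmk]; exact hDA
      · by_cases hbl : z ∈ (e : Sym2 V) ∧ ∃ s ∈ SA, z ∈ (s : Sym2 V)
        · obtain ⟨hze, s, hsSA, hzs⟩ := hbl
          obtain ⟨hsA, -, -⟩ := id hsSA
          exact ⟨s, Or.inl hsSA, Or.inr (Or.inr ⟨hQ, hsA, hze, hzs⟩)⟩
        · have hmem : mkE G B e hQ ∈
              {g | ∃ (e : G.edgeSet) (he : allIn G B e), e ∈ Z ∧
                ¬ (z ∈ (e : Sym2 V) ∧ ∃ s ∈ SA, z ∈ (s : Sym2 V)) ∧ mkE G B e he = g} :=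
            ⟨e, hQ, heZ, hbl, rfl⟩
          have hnot : mkE G B e hQ ∉ SB' := fun hc => heS (Or.inr ⟨hQ, heZ, hbl, hc⟩)
          obtain ⟨s', hs'S, hDB⟩ := hSB'dom _ hmem hnot
          obtain ⟨f, hf, hfZ, hfbl, hmk⟩ := hSB'sub hs'S
          refine ⟨f, Or.inr ⟨hf, hfZ, hfbl, by rw [hmk]; exact hs'S⟩,
            Or.inr (Or.inl ⟨hQ, hf, ?_⟩)⟩
          rw [hmk]; exact hDB
  · -- out-degree bound
    intro e
    rcases allIn_classify G hcover hinter hsep e with hP | hQ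
    · have hDf : ∀ f : G.edgeSet,
          (∃ (he : allIn G A e) (hf : allIn G A f), DA (mkE G A e he) (mkE G A f hf)) ∨
          (∃ (he : allIn G B e) (hf : allIn G B f), DB (mkE G B e he) (mkE G B f hf)) ∨
          (allIn G B e ∧ allIn G A f ∧ z ∈ (e : Sym2 V) ∧ z ∈ (f : Sym2 V)) →
          ∃ hf : allIn G A f, DA (mkE G A e hP) (mkE G A f hf) := by
        rintro f (⟨he', hf', h⟩ | ⟨he', _, _⟩ | ⟨he', _, _, _⟩)
        · exact ⟨hf', h⟩
        · exact (not_allIn_both G hinter e hP he').elim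
        · exact (not_allIn_both G hinter e hP he').elim
      have h1 : outDeg (fun e f =>
          (∃ (he : allIn G A e) (hf : allIn G A f), DA (mkE G A e he) (mkE G A f hf)) ∨
          (∃ (he : allIn G B e) (hf : allIn G B f), DB (mkE G B e he) (mkE G B f hf)) ∨
          (allIn G B e ∧ allIn G A f ∧ z ∈ (e : Sym2 V) ∧ z ∈ (f : Sym2 V))) e
          ≤ outDeg DA (mkE G A e hP) := by
        refine Set.ncard_le_ncard_of_injOn
          (fun f => if h : allIn G A f then mkE G A f h else mkE G A e hP) ?_ ?_ (Set.toFinite _)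
        · intro f hf
          obtain ⟨hfA, h⟩ := hDf f hf
          show (if h : allIn G A f then mkE G A f h else mkE G A e hP) ∈
            {g | DA (mkE G A e hP) g}
          rw [dif_pos hfA]; exact h
        · intro f₁ h₁ f₂ h₂ heq
          obtain ⟨hf₁, _⟩ := hDf f₁ h₁
          obtain ⟨hf₂, _⟩ := hDf f₂ h₂
          simp only [dif_pos hf₁, dif_pos hf₂] at heq
          exact mkE_inj G A heq
      have h2 := DAdeg (mkE G A e hP)
      have h3 : fkv (G.induce A) k ⟨v, hv⟩ (mkE G A e hP) ≤ fkv G k v e := by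
        by_cases hve : v ∈ (e : Sym2 V)
        · simp only [fkv]
          rw [if_pos ((mem_mkE G A hP ⟨v, hv⟩).mpr hve), if_pos hve]
          exact deg_induce_le G A ⟨v, hv⟩
        · simp only [fkv]
          rw [if_neg (fun hc => hve ((mem_mkE G A hP ⟨v, hv⟩).mp hc)), if_neg hve]
      omega
    · have hDf : ∀ f : G.edgeSet,
          (∃ (he : allIn G A e) (hf : allIn G A f), DA (mkE G A e he) (mkE G A f hf)) ∨
          (∃ (he : allIn G B e) (hf : allIn G B f), DB (mkE G B e he) (mkE G B f hf)) ∨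
          (allIn G B e ∧ allIn G A f ∧ z ∈ (e : Sym2 V) ∧ z ∈ (f : Sym2 V)) →
          (∃ hf : allIn G B f, DB (mkE G B e hQ) (mkE G B f hf)) ∨
          (allIn G A f ∧ z ∈ (e : Sym2 V) ∧ z ∈ (f : Sym2 V)) := by
        rintro f (⟨he', _, _⟩ | ⟨he', hf', h⟩ | ⟨_, hf', hze, hzf⟩)
        · exact (not_allIn_both G hinter e he' hQ).elim
        · exact Or.inl ⟨hf', h⟩
        · exact Or.inr ⟨hf', hze, hzf⟩
      set S2 : Set G.edgeSet :=
        {f | allIn G A f ∧ z ∈ (e : Sym2 V) ∧ z ∈ (f : Sym2 V)} with hS2def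
      have hmain : outDeg (fun e f =>
          (∃ (he : allIn G A e) (hf : allIn G A f), DA (mkE G A e he) (mkE G A f hf)) ∨
          (∃ (he : allIn G B e) (hf : allIn G B f), DB (mkE G B e he) (mkE G B f hf)) ∨
          (allIn G B e ∧ allIn G A f ∧ z ∈ (e : Sym2 V) ∧ z ∈ (f : Sym2 V))) e
          ≤ outDeg DB (mkE G B e hQ) + S2.ncard := by
        have hsub : {f : G.edgeSet |
            (∃ (he : allIn G A e) (hf : allIn G A f), DA (mkE G A e he) (mkE G A f hf)) ∨
            (∃ (he : allIn G B e) (hf : allIn G B f), DB (mkE G B e he) (mkE G B f hf)) ∨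
            (allIn G B e ∧ allIn G A f ∧ z ∈ (e : Sym2 V) ∧ z ∈ (f : Sym2 V))} ⊆
            {f : G.edgeSet | ∃ hf : allIn G B f, DB (mkE G B e hQ) (mkE G B f hf)} ∪ S2 := by
          intro f hf
          rcases hDf f hf with h | h
          · exact Or.inl h
          · exact Or.inr h
        have hc1 : {f : G.edgeSet | ∃ hf : allIn G B f,
            DB (mkE G B e hQ) (mkE G B f hf)}.ncard ≤ outDeg DB (mkE G B e hQ) := by
          refine Set.ncard_le_ncard_of_injOn
            (fun f => if h : allIn G B f then mkE G B f h else mkE G B e hQ) ?_ ?_ (Set.toFinite _)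
          · rintro f ⟨hfB, h⟩
            show (if h : allIn G B f then mkE G B f h else mkE G B e hQ) ∈
              {g | DB (mkE G B e hQ) g}
            rw [dif_pos hfB]; exact h
          · rintro f₁ ⟨hf₁, _⟩ f₂ ⟨hf₂, _⟩ heq
            simp only [dif_pos hf₁, dif_pos hf₂] at heq
            exact mkE_inj G B heq
        calc _ ≤ ({f : G.edgeSet | ∃ hf : allIn G B f,
                DB (mkE G B e hQ) (mkE G B f hf)} ∪ S2).ncard :=
              Set.ncard_le_ncard hsub (Set.toFinite _)
          _ ≤ {f : G.edgeSet | ∃ hf : allIn G B f,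
                DB (mkE G B e hQ) (mkE G B f hf)}.ncard + S2.ncard :=
              Set.ncard_union_le _ _
          _ ≤ _ := by omega
      by_cases hze : z ∈ (e : Sym2 V)
      · have hc2 : S2.ncard ≤ deg (G.induce A) ⟨z, hz.1⟩ := by
          rcases Set.eq_empty_or_nonempty S2 with hemp | ⟨f₀, hf₀⟩
          · rw [hemp]; simp
          · refine le_trans (Set.ncard_le_ncard_of_injOn
              (fun f => if h : allIn G A f then mkE G A f h else mkE G A f₀ hf₀.1)
              ?_ ?_ (Set.toFinite _))
              (incid_le_deg (G.induce A) ⟨z, hz.1⟩ _ (fun g hg => hg))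
            · rintro f ⟨hfA, _, hzf⟩
              show (if h : allIn G A f then mkE G A f h else mkE G A f₀ hf₀.1) ∈
                {g : (G.induce A).edgeSet | (⟨z, hz.1⟩ : A) ∈ (g : Sym2 A)}
              rw [dif_pos hfA]
              exact (mem_mkE G A hfA ⟨z, hz.1⟩).mpr hzf
            · rintro f₁ ⟨hf₁, _⟩ f₂ ⟨hf₂, _⟩ heq
              simp only [dif_pos hf₁, dif_pos hf₂] at heq
              exact mkE_inj G A heq
        have hb1 : outDeg DB (mkE G B e hQ) + 1 ≤ deg (G.induce B) ⟨z, hz.2⟩ := by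
          have h := DBdeg (mkE G B e hQ)
          simp only [fkv] at h
          rwa [if_pos ((mem_mkE G B hQ ⟨z, hz.2⟩).mpr hze)] at h
        have hdeg := deg_split G A B z hcover hinter hz.1 hz.2
        have hfin : deg G z ≤ fkv G k v e := by
          by_cases hve : v ∈ (e : Sym2 V)
          · have hvz : v = z := by
              have : v ∈ A ∩ B := ⟨hv, hQ v hve⟩
              rwa [hinter] at this
            subst hvz
            simp only [fkv]
            rw [if_pos hve]
          · simp only [fkv]
            rw [if_neg hve]
            exact deg_le_of_maxDeg_le G k hΔ z
        omega
      · have hS2 : S2 = ∅ := by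
          ext f
          simp only [hS2def, Set.mem_setOf_eq, Set.mem_empty_iff_false, iff_false]
          rintro ⟨_, hze', _⟩
          exact hze hze'
        have hb1 : outDeg DB (mkE G B e hQ) + 1 ≤ k := by
          have h := DBdeg (mkE G B e hQ)
          simp only [fkv] at h
          rwa [if_neg (fun hc => hze ((mem_mkE G B hQ ⟨z, hz.2⟩).mp hc))] at h
        have hfin : fkv G k v e = k := by
          simp only [fkv]
          rw [if_neg]
          intro hve
          have hvz : v = z := by
            have : v ∈ A ∩ B := ⟨hv, hQ v hve⟩
            rwa [hinter] at this
          exact hze (hvz ▸ hve)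
        rw [hS2] at hmain
        simp only [Set.ncard_empty] at hmain
        omega
/-- if `V(G) = A ∪ B` with `A ∩ B = {z}`, no edges between
`A − z` and `B − z`, `Δ(G) ≤ k`, and `G[A]`, `G[B]` strongly `k`-edge-orientable,
then `G` is strongly `k`-edge-orientable. -/
theorem stmt10 {V : Type*} [Fintype V] (G : SimpleGraph V) (k : ℕ)
    (hΔ : maxDeg G ≤ k) (A B : Set V) (z : V)
    (hcover : A ∪ B = Set.univ) (hinter : A ∩ B = {z})
    (hsep : ∀ a ∈ A, ∀ b ∈ B, a ≠ z → b ≠ z → ¬ G.Adj a b)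
    (hA : StronglyEdgeOrientable (G.induce A) k)
    (hB : StronglyEdgeOrientable (G.induce B) k) :
    StronglyEdgeOrientable G k := by
  intro v
  have hv : v ∈ A ∪ B := by rw [hcover]; trivial
  rcases hv with hvA | hvB
  · exact half G k hΔ A B z hcover hinter hsep hA hB v hvA
  · exact half G k hΔ B A z (by rw [Set.union_comm]; exact hcover)
      (by rw [Set.inter_comm]; exact hinter)
      (fun a ha b hb hna hnb h => hsep b hb a ha hnb hna h.symm)
      hB hA v hvB
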